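/- Assume: consistency for a=0 and a=2; conditional mean exchangeability over A in the trial for a=0 with trial positivity for a=0; conditional exchangeability over A in the external data for a=0 and a=2 with external treatment positivity for a=0 and a=2; external-source positivity P(S=0|X=x)>0 for x with P(X=x,S=1)>0; transportability of conditional relative effect measures: E[Y²|X=x,S=1]/E[Y⁰|X=x,S=1] = E[Y²|X=x,S=0]/E[Y⁰|X=x,S=0] whenever both P(X=x,S=1)>0 and P(X=x,S=0)>0, with all four conditional means nonzero. Then E[Y² | S=1] = ρ := Σ_x E[Y|X=x,S=1,A=0] · (E[Y|X=x,S=0,A=2] / E[Y|X=x,S=0,A=0]) · P(X=x | S=1), summing over x with P(X=x,S=1)>0. -/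

import Mathlib

open Finset
open scoped Classical

noncomputable def pr {Ω : Type*} [Fintype Ω] (P : Ω → ℝ) (E : Ω → Prop) : ℝ :=
  ∑ ω, if E ω then P ω else 0

noncomputable def cexp {Ω : Type*} [Fintype Ω] (P : Ω → ℝ) (Y : Ω → ℝ) (E : Ω → Prop) : ℝ :=
  (∑ ω, if E ω then Y ω * P ω else 0) / pr P E

noncomputable def cpr {Ω : Type*} [Fintype Ω] (P : Ω → ℝ) (E F : Ω → Prop) : ℝ :=
  pr P (fun ω => E ω ∧ F ω) / pr P F

/-
Conditioning on the covariate stratum within the trial population, the law of total expectation writes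
E[Y² | S = 1] as the average of E[Y² | X = x, S = 1] against P(X = x | S = 1), where only strata of
positive mass contribute. In such a stratum external-source positivity makes the stratum X = x, S = 0
non-null, so transportability of the relative effect gives
E[Y² | x, S = 1] = E[Y⁰ | x, S = 1] · E[Y² | x, S = 0] / E[Y⁰ | x, S = 0]
(dividing by E[Y⁰ | x, S = 1] ≠ 0), and mean exchangeability together with consistency replaces each of
the three potential-outcome means by the observed mean of Y in the corresponding treatment arm.
-/

section

variable {Ω 𝓧 : Type*} [Fintype Ω] {P : Ω → ℝ}

lemma pr_nonneg (hP : ∀ ω, 0 ≤ P ω) (E : Ω → Prop) : 0 ≤ pr P E :=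
  sum_nonneg fun ω _ => by split_ifs <;> simp [hP ω]

lemma pr_pos_of_cpr_pos (hP : ∀ ω, 0 ≤ P ω) {E F : Ω → Prop} (h : 0 < cpr P E F) :
    0 < pr P (fun ω => E ω ∧ F ω) := by
  refine (pr_nonneg hP _).lt_of_ne fun h0 => ?_
  simp [cpr, ← h0] at h

lemma cexp_congr {f g : Ω → ℝ} {E : Ω → Prop} (h : ∀ ω, E ω → f ω = g ω) :
    cexp P f E = cexp P g E := by
  unfold cexp
  congr 1
  exact sum_congr rfl fun ω _ => by split_ifs with hω <;> simp [h ω, hω]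

noncomputable def partialExp (P : Ω → ℝ) (f : Ω → ℝ) (E : Ω → Prop) : ℝ :=
  ∑ ω, if E ω then f ω * P ω else 0

lemma cexp_eq_partialExp_div (f : Ω → ℝ) (E : Ω → Prop) :
    cexp P f E = partialExp P f E / pr P E :=
  rfl

lemma partialExp_eq_zero_of_pr_eq_zero (hP : ∀ ω, 0 ≤ P ω) {E : Ω → Prop} (hE : pr P E = 0)
    (f : Ω → ℝ) : partialExp P f E = 0 := by
  have hnull := (sum_eq_zero_iff_of_nonneg fun ω _ => by split_ifs <;> simp [hP ω]).mp hE
  refine sum_eq_zero fun ω _ => ?_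
  split_ifs with hω
  · simpa [hω] using congrArg (f ω * ·) (hnull ω (mem_univ ω))
  · rfl

lemma partialExp_eq_sum_fiber [Fintype 𝓧] (X : Ω → 𝓧) (f : Ω → ℝ) (E : Ω → Prop) :
    partialExp P f E = ∑ x, partialExp P f (fun ω => X ω = x ∧ E ω) := by
  unfold partialExp
  rw [sum_comm]
  refine sum_congr rfl fun ω _ => ?_
  by_cases hE : E ω <;> simp [hE]

theorem cexp_eq_sum_cexp_mul_pr_div (hP : ∀ ω, 0 ≤ P ω) [Fintype 𝓧] (f : Ω → ℝ) (E : Ω → Prop)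
    (X : Ω → 𝓧) :
    cexp P f E = ∑ x ∈ univ.filter (fun x => 0 < pr P (fun ω => X ω = x ∧ E ω)),
      cexp P f (fun ω => X ω = x ∧ E ω) * (pr P (fun ω => X ω = x ∧ E ω) / pr P E) := by
  have hstratum : ∀ x ∈ univ.filter (fun x => 0 < pr P (fun ω => X ω = x ∧ E ω)),
      cexp P f (fun ω => X ω = x ∧ E ω) * (pr P (fun ω => X ω = x ∧ E ω) / pr P E) =
        partialExp P f (fun ω => X ω = x ∧ E ω) / pr P E := by
    intro x hx
    have hpos := (mem_filter.mp hx).2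
    rw [cexp_eq_partialExp_div]
    field_simp
  have hnull : ∀ x ∈ univ, partialExp P f (fun ω => X ω = x ∧ E ω) ≠ 0 →
      0 < pr P (fun ω => X ω = x ∧ E ω) := fun x _ hne =>
    (pr_nonneg hP _).lt_of_ne fun h0 => hne (partialExp_eq_zero_of_pr_eq_zero hP h0.symm f)
  rw [sum_congr rfl hstratum, ← sum_div, sum_filter_of_ne hnull, ← partialExp_eq_sum_fiber X,
    cexp_eq_partialExp_div]

end

theorem stmt9_general    {Ω 𝓧 : Type*} [Fintype Ω] [Fintype 𝓧]
    (P : Ω → ℝ) (hP : ∀ ω, 0 ≤ P ω)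
    (X : Ω → 𝓧) (S : Ω → ℕ) (A : Ω → ℕ) (Y : Ω → ℝ)
    (Y0 Y2 : Ω → ℝ)
    (hcons0 : ∀ ω, A ω = 0 → Y0 ω = Y ω)
    (hcons2 : ∀ ω, A ω = 2 → Y2 ω = Y ω)
    (hexch0 : ∀ x, 0 < pr P (fun ω => X ω = x ∧ S ω = 1) → cexp P Y0 (fun ω => X ω = x ∧ S ω = 1) = cexp P Y0 (fun ω => X ω = x ∧ S ω = 1 ∧ A ω = 0))
    (hexchext0 : ∀ x, 0 < pr P (fun ω => X ω = x ∧ S ω = 0) → cexp P Y0 (fun ω => X ω = x ∧ S ω = 0) = cexp P Y0 (fun ω => X ω = x ∧ S ω = 0 ∧ A ω = 0))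
    (hexchext2 : ∀ x, 0 < pr P (fun ω => X ω = x ∧ S ω = 0) → cexp P Y2 (fun ω => X ω = x ∧ S ω = 0) = cexp P Y2 (fun ω => X ω = x ∧ S ω = 0 ∧ A ω = 2))
    (hextpos : ∀ x, 0 < pr P (fun ω => X ω = x ∧ S ω = 1) → 0 < cpr P (fun ω => S ω = 0) (fun ω => X ω = x))
    (htransratio : ∀ x, 0 < pr P (fun ω => X ω = x ∧ S ω = 1) → 0 < pr P (fun ω => X ω = x ∧ S ω = 0) →
      cexp P Y2 (fun ω => X ω = x ∧ S ω = 1) / cexp P Y0 (fun ω => X ω = x ∧ S ω = 1) =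
      cexp P Y2 (fun ω => X ω = x ∧ S ω = 0) / cexp P Y0 (fun ω => X ω = x ∧ S ω = 0))
    (hne : ∀ x, 0 < pr P (fun ω => X ω = x ∧ S ω = 1) → 0 < pr P (fun ω => X ω = x ∧ S ω = 0) →
      cexp P Y2 (fun ω => X ω = x ∧ S ω = 1) ≠ 0 ∧ cexp P Y0 (fun ω => X ω = x ∧ S ω = 1) ≠ 0 ∧
      cexp P Y2 (fun ω => X ω = x ∧ S ω = 0) ≠ 0 ∧ cexp P Y0 (fun ω => X ω = x ∧ S ω = 0) ≠ 0)
    : cexp P Y2 (fun ω => S ω = 1) =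
      ∑ x ∈ univ.filter (fun x => 0 < pr P (fun ω => X ω = x ∧ S ω = 1)),
        cexp P Y (fun ω => X ω = x ∧ S ω = 1 ∧ A ω = 0) * (cexp P Y (fun ω => X ω = x ∧ S ω = 0 ∧ A ω = 2) / cexp P Y (fun ω => X ω = x ∧ S ω = 0 ∧ A ω = 0)) * (pr P (fun ω => X ω = x ∧ S ω = 1) / pr P (fun ω => S ω = 1)) := by
  rw [cexp_eq_sum_cexp_mul_pr_div hP Y2 (fun ω => S ω = 1) X]
  refine sum_congr rfl fun x hx => congrArg (· * _) ?_
  have hx1 := (mem_filter.mp hx).2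
  have hx0 : 0 < pr P (fun ω => X ω = x ∧ S ω = 0) := by
    simpa only [and_comm] using pr_pos_of_cpr_pos hP (hextpos x hx1)
  rw [← (hexch0 x hx1).trans (cexp_congr fun ω hω => hcons0 ω hω.2.2),
    ← (hexchext2 x hx0).trans (cexp_congr fun ω hω => hcons2 ω hω.2.2),
    ← (hexchext0 x hx0).trans (cexp_congr fun ω hω => hcons0 ω hω.2.2), mul_comm]
  exact (div_eq_iff (hne x hx1 hx0).2.1).mp (htransratio x hx1 hx0)

theorem stmt9    {Ω 𝓧 : Type*} [Fintype Ω] [Fintype 𝓧]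
    (P : Ω → ℝ) (hP : ∀ ω, 0 ≤ P ω) (hPsum : ∑ ω, P ω = 1)
    (X : Ω → 𝓧) (S : Ω → ℕ) (A : Ω → ℕ) (Y : Ω → ℝ)
    (Y0 Y2 : Ω → ℝ)
    (hS1 : 0 < pr P (fun ω => S ω = 1))
    (hcons0 : ∀ ω, A ω = 0 → Y0 ω = Y ω)
    (hcons2 : ∀ ω, A ω = 2 → Y2 ω = Y ω)
    (hexch0 : ∀ x, 0 < pr P (fun ω => X ω = x ∧ S ω = 1) → cexp P Y0 (fun ω => X ω = x ∧ S ω = 1) = cexp P Y0 (fun ω => X ω = x ∧ S ω = 1 ∧ A ω = 0))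
    (hpos0 : ∀ x, 0 < pr P (fun ω => X ω = x ∧ S ω = 1) → 0 < cpr P (fun ω => A ω = 0) (fun ω => X ω = x ∧ S ω = 1))
    (hexchext0 : ∀ x, 0 < pr P (fun ω => X ω = x ∧ S ω = 0) → cexp P Y0 (fun ω => X ω = x ∧ S ω = 0) = cexp P Y0 (fun ω => X ω = x ∧ S ω = 0 ∧ A ω = 0))
    (hexchext2 : ∀ x, 0 < pr P (fun ω => X ω = x ∧ S ω = 0) → cexp P Y2 (fun ω => X ω = x ∧ S ω = 0) = cexp P Y2 (fun ω => X ω = x ∧ S ω = 0 ∧ A ω = 2))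
    (hposext0 : ∀ x, 0 < pr P (fun ω => X ω = x ∧ S ω = 0) → 0 < cpr P (fun ω => A ω = 0) (fun ω => X ω = x ∧ S ω = 0))
    (hposext2 : ∀ x, 0 < pr P (fun ω => X ω = x ∧ S ω = 0) → 0 < cpr P (fun ω => A ω = 2) (fun ω => X ω = x ∧ S ω = 0))
    (hextpos : ∀ x, 0 < pr P (fun ω => X ω = x ∧ S ω = 1) → 0 < cpr P (fun ω => S ω = 0) (fun ω => X ω = x))
    (htransratio : ∀ x, 0 < pr P (fun ω => X ω = x ∧ S ω = 1) → 0 < pr P (fun ω => X ω = x ∧ S ω = 0) →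
      cexp P Y2 (fun ω => X ω = x ∧ S ω = 1) / cexp P Y0 (fun ω => X ω = x ∧ S ω = 1) =
      cexp P Y2 (fun ω => X ω = x ∧ S ω = 0) / cexp P Y0 (fun ω => X ω = x ∧ S ω = 0))
    (hne : ∀ x, 0 < pr P (fun ω => X ω = x ∧ S ω = 1) → 0 < pr P (fun ω => X ω = x ∧ S ω = 0) →
      cexp P Y2 (fun ω => X ω = x ∧ S ω = 1) ≠ 0 ∧ cexp P Y0 (fun ω => X ω = x ∧ S ω = 1) ≠ 0 ∧
      cexp P Y2 (fun ω => X ω = x ∧ S ω = 0) ≠ 0 ∧ cexp P Y0 (fun ω => X ω = x ∧ S ω = 0) ≠ 0)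
    : cexp P Y2 (fun ω => S ω = 1) =
      ∑ x ∈ univ.filter (fun x => 0 < pr P (fun ω => X ω = x ∧ S ω = 1)),
        cexp P Y (fun ω => X ω = x ∧ S ω = 1 ∧ A ω = 0) * (cexp P Y (fun ω => X ω = x ∧ S ω = 0 ∧ A ω = 2) / cexp P Y (fun ω => X ω = x ∧ S ω = 0 ∧ A ω = 0)) * (pr P (fun ω => X ω = x ∧ S ω = 1) / pr P (fun ω => S ω = 1)) :=
  stmt9_general P hP X S A Y Y0 Y2 hcons0 hcons2 hexch0 hexchext0 hexchext2 hextpos htransratio hne
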